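/- arXiv:1402.7166 — 6 statements merged into one kernel-verified Lean document; each statement's English description precedes it below -/
import Mathlib

section
/- Let x_1,…,x_{2k+1} be distinct nonnegative reals, f a real polynomial of degree at most 2k−1 with f(x) ≥ 0 for all x < 0, and let w_i = −C·f(x_i)/∏_{j≠i}(x_j − x_i) for some C > 0. Then ∑_i w_i = 0 and for every λ > 0, ∑_i w_i/(λ + x_i) ≤ 0. -/
/-!
Up to the factor `-C`, the weights are `f(x_i) / ∏_{j ≠ i} (x_i - x_j)`: reversing the `2k`
differences does not change the sign. The sum of these numbers is the coefficient of `X^{2k}` in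
the Lagrange interpolant of `f` through the `2k+1` nodes, i.e. of `f` itself, hence zero. For
`λ > 0`, the barycentric form of the interpolant at the point `-λ`, which is not a node, gives
`∑ f(x_i) / ∏_{j ≠ i} (x_i - x_j) / (-λ - x_i) = f(-λ) / ∏_i (-λ - x_i)`; here the numerator is
nonnegative and the denominator is a product of an odd number of negative factors.
-/

open Polynomial Finset

namespace Lagrange

section Field

variable {F : Type*} [Field F] {ι : Type*} [DecidableEq ι] {s : Finset ι} {v : ι → F}

theorem sum_eval_div_prod_erase_sub_eq_zero (hvs : Set.InjOn v s) {f : F[X]}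
    (hf : f.degree < ↑(#s - 1)) :
    ∑ i ∈ s, f.eval (v i) / ∏ j ∈ s.erase i, (v i - v j) = 0 := by
  have hf' : f.degree < #s := hf.trans_le (by exact_mod_cast Nat.sub_le _ 1)
  rw [← coeff_eq_sum hvs hf', coeff_eq_zero_of_degree_lt hf]

theorem eval_div_eval_nodal_eq_sum (hvs : Set.InjOn v s) {f : F[X]} (hf : f.degree < #s)
    {t : F} (ht : ∀ i ∈ s, t ≠ v i) :
    f.eval t / (nodal s v).eval t =
      ∑ i ∈ s, f.eval (v i) / (∏ j ∈ s.erase i, (v i - v j)) / (t - v i) := by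
  conv_lhs => rw [eq_interpolate hvs hf]
  rw [eval_interpolate_not_at_node _ ht, mul_div_cancel_left₀ _ (eval_nodal_not_at_node ht)]
  refine sum_congr rfl fun i _ => ?_
  rw [nodalWeight, prod_inv_distrib]
  ring

end Field

theorem eval_nodal_neg_of_odd_card {R : Type*} [CommRing R] [PartialOrder R]
    [IsStrictOrderedRing R] {ι : Type*} {s : Finset ι} {v : ι → R} (hs : Odd #s) {t : R}
    (ht : ∀ i ∈ s, t < v i) : (nodal s v).eval t < 0 := by
  have hpos : 0 < ∏ i ∈ s, (v i - t) := prod_pos fun i hi => sub_pos.2 (ht i hi)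
  calc (nodal s v).eval t = ∏ i ∈ s, -(v i - t) := by
        rw [eval_nodal]
        exact prod_congr rfl fun i _ => (neg_sub _ _).symm
    _ = -∏ i ∈ s, (v i - t) := by rw [prod_neg, hs.neg_one_pow, neg_one_mul]
    _ < 0 := neg_neg_iff_pos.2 hpos

end Lagrange

theorem Finset.prod_erase_sub_comm_of_odd_card {R : Type*} [CommRing R] {ι : Type*}
    [DecidableEq ι] {s : Finset ι} (hs : Odd #s) (v : ι → R) {i : ι} (hi : i ∈ s) :
    ∏ j ∈ s.erase i, (v j - v i) = ∏ j ∈ s.erase i, (v i - v j) := by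
  have heven : Even #(s.erase i) := by
    rw [card_erase_of_mem hi]
    exact Nat.Odd.sub_odd hs odd_one
  calc ∏ j ∈ s.erase i, (v j - v i) = ∏ j ∈ s.erase i, -(v i - v j) :=
        prod_congr rfl fun j _ => (neg_sub _ _).symm
    _ = ∏ j ∈ s.erase i, (v i - v j) := by rw [prod_neg, heven.neg_one_pow, one_mul]

open Lagrange in
/-- Mochon's weight lemma: for `2k+1` distinct nonnegative reals, a polynomial `f` of degree
at most `2k-1` that is nonnegative on the negative reals, and any `C > 0`, the weights
`w_i = -C·f(x_i)/∏_{j≠i}(x_j - x_i)` satisfy `∑ w_i = 0` and `∑ w_i/(λ + x_i) ≤ 0` for all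
`λ > 0`. -/
theorem weight_polynomial_valid (k : ℕ) (hk : 1 ≤ k) (x : Fin (2 * k + 1) → ℝ)
    (hx : Function.Injective x) (hxpos : ∀ i, 0 ≤ x i)
    (f : Polynomial ℝ) (hdeg : f.degree ≤ (2 * k - 1 : ℕ))
    (hfneg : ∀ t : ℝ, t < 0 → 0 ≤ f.eval t)
    (C : ℝ) (hC : 0 < C) (w : Fin (2 * k + 1) → ℝ)
    (hw : ∀ i, w i = -C * f.eval (x i) / ∏ j ∈ Finset.univ.erase i, (x j - x i)) :
    (∑ i, w i = 0) ∧ ∀ lam : ℝ, 0 < lam → ∑ i, w i / (lam + x i) ≤ 0 := by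
  have hcard : #(univ : Finset (Fin (2 * k + 1))) = 2 * k + 1 := card_fin _
  have hodd : Odd #(univ : Finset (Fin (2 * k + 1))) := by
    rw [hcard]; exact odd_two_mul_add_one k
  have hw' : ∀ i, w i = -C * (f.eval (x i) / ∏ j ∈ univ.erase i, (x i - x j)) := fun i => by
    rw [hw, prod_erase_sub_comm_of_odd_card hodd x (mem_univ i), mul_div_assoc]
  refine ⟨?_, fun lam hlam => ?_⟩
  · have hf : f.degree < ↑(#(univ : Finset (Fin (2 * k + 1))) - 1) :=
      hdeg.trans_lt (by rw [hcard]; exact_mod_cast (by omega : 2 * k - 1 < 2 * k + 1 - 1))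
    rw [sum_congr rfl fun i _ => hw' i, ← mul_sum,
      sum_eval_div_prod_erase_sub_eq_zero hx.injOn hf, mul_zero]
  · have hf : f.degree < #(univ : Finset (Fin (2 * k + 1))) :=
      hdeg.trans_lt (by rw [hcard]; exact_mod_cast (by omega : 2 * k - 1 < 2 * k + 1))
    have hnodes : ∀ i ∈ univ, -lam < x i := fun i _ => by linarith [hxpos i]
    calc ∑ i, w i / (lam + x i)
        = C * ∑ i, f.eval (x i) / (∏ j ∈ univ.erase i, (x i - x j)) / (-lam - x i) := by
          rw [mul_sum]
          refine sum_congr rfl fun i _ => ?_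
          rw [hw' i, ← neg_add', div_neg]
          ring
      _ = C * (f.eval (-lam) / (nodal univ x).eval (-lam)) := by
          rw [eval_div_eval_nodal_eq_sum hx.injOn hf fun i hi => (hnodes i hi).ne]
      _ ≤ 0 := mul_nonpos_of_nonneg_of_nonpos hC.le <| div_nonpos_of_nonneg_of_nonpos
          (hfneg _ (neg_lt_zero.2 hlam)) (eval_nodal_neg_of_odd_card hodd hnodes).le
end

section
/- Let w₁, w₂ > 0 and x₁, x₂, x₃ ≥ 0. Then w₁f(x₁) + w₂f(x₂) ≤ (w₁+w₂)f(x₃) for every operator monotone function f : [0,∞) → ℝ if and only if x₃ ≥ (w₁x₁ + w₂x₂)/(w₁ + w₂). -/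
open MeasureTheory

/-- Operator monotone functions on `[0,∞)`, given via Löwner's integral representation
`f(t) = c₀ + c₁ t + ∫₀^∞ λt/(λ+t) dw(λ)` with `c₁ ≥ 0` and `w` a nonnegative measure. -/
def IsOpMonotone (f : ℝ → ℝ) : Prop :=
  ∃ (c₀ c₁ : ℝ) (w : Measure ℝ), 0 ≤ c₁ ∧
    (∀ t : ℝ, 0 ≤ t → IntegrableOn (fun lam : ℝ => lam * t / (lam + t)) (Set.Ioi 0) w) ∧
    ∀ t : ℝ, 0 ≤ t → f t = c₀ + c₁ * t + ∫ lam in Set.Ioi (0:ℝ), lam * t / (lam + t) ∂w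

/-!
Every operator monotone `f` is a nonnegative combination of `1`, `t` and the kernels
`t ↦ λt/(λ+t)`, each concave and nondecreasing on `[0,∞)`; so `f` is too, and Jensen's inequality
followed by monotonicity gives `w₁f(x₁) + w₂f(x₂) ≤ (w₁+w₂) f(x̄) ≤ (w₁+w₂) f(x₃)` whenever the
barycentre `x̄` is at most `x₃`. Conversely, `f = id` is operator monotone and forces `x̄ ≤ x₃`.
-/

open Set

theorem ConcaveOn.weighted_add_le_of_div_le {s : Set ℝ} {g : ℝ → ℝ} (hconc : ConcaveOn ℝ s g)
    (hmono : MonotoneOn g s) {w₁ w₂ x₁ x₂ x₃ : ℝ} (hw₁ : 0 ≤ w₁) (hw₂ : 0 ≤ w₂)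
    (hw : 0 < w₁ + w₂) (hx₁ : x₁ ∈ s) (hx₂ : x₂ ∈ s) (hx₃ : x₃ ∈ s)
    (h : (w₁ * x₁ + w₂ * x₂) / (w₁ + w₂) ≤ x₃) :
    w₁ * g x₁ + w₂ * g x₂ ≤ (w₁ + w₂) * g x₃ := by
  set a := w₁ / (w₁ + w₂)
  set b := w₂ / (w₁ + w₂)
  have hab : a + b = 1 := by rw [← add_div, div_self hw.ne']
  have hmean : a * x₁ + b * x₂ = (w₁ * x₁ + w₂ * x₂) / (w₁ + w₂) := by
    simp only [a, b]; ring
  have hmean_mem : a * x₁ + b * x₂ ∈ s :=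
    hconc.1 hx₁ hx₂ (div_nonneg hw₁ hw.le) (div_nonneg hw₂ hw.le) hab
  have jensen : a * g x₁ + b * g x₂ ≤ g (a * x₁ + b * x₂) :=
    hconc.2 hx₁ hx₂ (div_nonneg hw₁ hw.le) (div_nonneg hw₂ hw.le) hab
  have hle : a * g x₁ + b * g x₂ ≤ g x₃ :=
    jensen.trans (hmono hmean_mem hx₃ (hmean ▸ h))
  calc w₁ * g x₁ + w₂ * g x₂ = (w₁ + w₂) * (a * g x₁ + b * g x₂) := by
        simp only [a, b]; field_simp
    _ ≤ (w₁ + w₂) * g x₃ := mul_le_mul_of_nonneg_left hle hw.le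

section Integral

variable {α E : Type*} [MeasurableSpace α] {μ : Measure α} {k : α → E → ℝ}

theorem concaveOn_integral [AddCommMonoid E] [Module ℝ E] {s : Set E} (hs : Convex ℝ s)
    (hconc : ∀ᵐ a ∂μ, ConcaveOn ℝ s (k a)) (hint : ∀ t ∈ s, Integrable (fun a => k a t) μ) :
    ConcaveOn ℝ s fun t => ∫ a, k a t ∂μ := by
  refine ⟨hs, fun x hx y hy p q hp hq hpq => ?_⟩
  have hxy := hs hx hy hp hq hpq
  calc p • ∫ a, k a x ∂μ + q • ∫ a, k a y ∂μ = ∫ a, (p • k a x + q • k a y) ∂μ := by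
        rw [← integral_smul, ← integral_smul]
        exact (integral_add ((hint x hx).smul p) ((hint y hy).smul q)).symm
    _ ≤ ∫ a, k a (p • x + q • y) ∂μ :=
        integral_mono_ae (((hint x hx).smul p).add ((hint y hy).smul q)) (hint _ hxy)
          (hconc.mono fun a ha => ha.2 hx hy hp hq hpq)

theorem monotoneOn_integral [Preorder E] {s : Set E} (hmono : ∀ᵐ a ∂μ, MonotoneOn (k a) s)
    (hint : ∀ t ∈ s, Integrable (fun a => k a t) μ) :
    MonotoneOn (fun t => ∫ a, k a t ∂μ) s := fun x hx y hy hxy =>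
  integral_mono_ae (hint x hx) (hint y hy) (hmono.mono fun _ ha => ha hx hy hxy)

end Integral

section Kernel

variable {l : ℝ}

theorem monotoneOn_mul_div_add (hl : 0 < l) : MonotoneOn (fun t => l * t / (l + t)) (Ici 0) := by
  intro x (hx : 0 ≤ x) y (hy : 0 ≤ y) hxy
  rw [div_le_div_iff₀ (by linarith) (by linarith)]
  nlinarith [mul_le_mul_of_nonneg_left hxy (sq_nonneg l)]

/-- Concavity comes from writing `l t / (l + t) = l - l² (l + t)⁻¹`. -/
theorem concaveOn_mul_div_add (hl : 0 < l) : ConcaveOn ℝ (Ici 0) (fun t => l * t / (l + t)) := by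
  have hinv : ConvexOn ℝ ((fun t => l + t) ⁻¹' Ioi 0) fun t => (l + t)⁻¹ := by
    have := (convexOn_zpow (𝕜 := ℝ) (-1)).translate_right l
    simp only [zpow_neg_one] at this
    exact this
  have hsub : Ici (0 : ℝ) ⊆ (fun t => l + t) ⁻¹' Ioi 0 := fun t (ht : 0 ≤ t) =>
    show 0 < l + t by linarith
  refine (((hinv.subset hsub (convex_Ici 0)).smul (sq_nonneg l)).neg.add_const l).congr ?_
  intro t (ht : 0 ≤ t)
  have : l + t ≠ 0 := by linarith
  simp only [Pi.add_apply, Pi.neg_apply, smul_eq_mul]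
  field_simp
  ring

end Kernel

namespace IsOpMonotone

variable {f : ℝ → ℝ}

theorem concaveOn (hf : IsOpMonotone f) : ConcaveOn ℝ (Ici 0) f := by
  obtain ⟨c₀, c₁, w, hc₁, hint, hrep⟩ := hf
  have hkernel : ConcaveOn ℝ (Ici 0) fun t => ∫ lam in Ioi (0:ℝ), lam * t / (lam + t) ∂w :=
    concaveOn_integral (convex_Ici 0)
      ((ae_restrict_iff' measurableSet_Ioi).2 (ae_of_all _ fun _ hl => concaveOn_mul_div_add hl))
      hint
  refine (((concaveOn_id (convex_Ici 0)).smul hc₁).add_const c₀ |>.add hkernel).congr ?_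
  intro t ht
  simp only [hrep t ht, Pi.add_apply, id, smul_eq_mul]
  ring

theorem monotoneOn (hf : IsOpMonotone f) : MonotoneOn f (Ici 0) := by
  obtain ⟨c₀, c₁, w, hc₁, hint, hrep⟩ := hf
  have hkernel : MonotoneOn (fun t => ∫ lam in Ioi (0:ℝ), lam * t / (lam + t) ∂w) (Ici 0) :=
    monotoneOn_integral
      ((ae_restrict_iff' measurableSet_Ioi).2 (ae_of_all _ fun _ hl => monotoneOn_mul_div_add hl))
      hint
  intro x hx y hy hxy
  rw [hrep x hx, hrep y hy]
  exact add_le_add (by gcongr) (hkernel hx hy hxy)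

end IsOpMonotone

theorem isOpMonotone_id : IsOpMonotone id :=
  ⟨0, 1, 0, zero_le_one, fun _ _ => by simp [IntegrableOn], fun _ _ => by simp⟩

/-- Point merge validity criterion: `w₁f(x₁) + w₂f(x₂) ≤ (w₁+w₂)f(x₃)` holds for every
operator monotone `f` if and only if `x₃ ≥ (w₁x₁ + w₂x₂)/(w₁+w₂)`. -/
theorem point_merge_valid_iff (w₁ w₂ : ℝ) (hw₁ : 0 < w₁) (hw₂ : 0 < w₂)
    (x₁ x₂ x₃ : ℝ) (hx₁ : 0 ≤ x₁) (hx₂ : 0 ≤ x₂) (hx₃ : 0 ≤ x₃) :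
    (∀ f : ℝ → ℝ, IsOpMonotone f → w₁ * f x₁ + w₂ * f x₂ ≤ (w₁ + w₂) * f x₃) ↔
      (w₁ * x₁ + w₂ * x₂) / (w₁ + w₂) ≤ x₃ := by
  have hw : 0 < w₁ + w₂ := add_pos hw₁ hw₂
  constructor
  · intro hmerge
    rw [div_le_iff₀ hw, mul_comm x₃]
    exact hmerge id isOpMonotone_id
  · intro hmean f hf
    exact hf.concaveOn.weighted_add_le_of_div_le hf.monotoneOn hw₁.le hw₂.le hw hx₁ hx₂ hx₃ hmean
end

section
/- Let w, w₁, w₂ > 0 with w = w₁ + w₂ and x, x₁, x₂ > 0. Then w·f(x) ≤ w₁f(x₁) + w₂f(x₂) for every operator monotone function f : [0,∞) → ℝ if and only if w/x ≥ w₁/x₁ + w₂/x₂. -/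
open MeasureTheory

/-!
In the variable `s = 1/t` the Löwner kernels `t = s⁻¹` and `λt/(λ+t) = (s + 1/λ)⁻¹` are convex and
decreasing. The criterion `w/x ≥ w₁/x₁ + w₂/x₂` says that `1/x` dominates the `w`-weighted mean of
`1/x₁, 1/x₂`, so Jensen's inequality gives the split inequality kernel by kernel, and integrating the
Löwner representation gives it for every operator monotone `f`. Conversely, as
`λt/(λ+t) = λ - λ²/(λ+t)`, validity for that kernel says `w₁/(λ+x₁) + w₂/(λ+x₂) ≤ w/(λ+x)`, and
`λ → 0⁺` yields the criterion.
-/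

open Set Filter Topology

theorem ConvexOn.mul_le_add_mul_of_antitoneOn {D : Set ℝ} {h : ℝ → ℝ} (hconv : ConvexOn ℝ D h)
    (hanti : AntitoneOn h D) {w₁ w₂ s s₁ s₂ : ℝ} (hw₁ : 0 ≤ w₁) (hw₂ : 0 ≤ w₂)
    (hs : s ∈ D) (hs₁ : s₁ ∈ D) (hs₂ : s₂ ∈ D) (hmean : w₁ * s₁ + w₂ * s₂ ≤ (w₁ + w₂) * s) :
    (w₁ + w₂) * h s ≤ w₁ * h s₁ + w₂ * h s₂ := by
  rcases (add_nonneg hw₁ hw₂).eq_or_lt with hw | hw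
  · obtain ⟨rfl, rfl⟩ : w₁ = 0 ∧ w₂ = 0 := ⟨by linarith, by linarith⟩
    simp
  have ha : 0 ≤ w₁ / (w₁ + w₂) := by positivity
  have hb : 0 ≤ w₂ / (w₁ + w₂) := by positivity
  have hab : w₁ / (w₁ + w₂) + w₂ / (w₁ + w₂) = 1 := by rw [← add_div, div_self hw.ne']
  have hbar : w₁ / (w₁ + w₂) * s₁ + w₂ / (w₁ + w₂) * s₂ ≤ s := by
    rw [div_mul_eq_mul_div, div_mul_eq_mul_div, ← add_div, div_le_iff₀ hw]
    linarith
  calc (w₁ + w₂) * h s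
      ≤ (w₁ + w₂) * h (w₁ / (w₁ + w₂) * s₁ + w₂ / (w₁ + w₂) * s₂) :=
        mul_le_mul_of_nonneg_left (hanti (hconv.1 hs₁ hs₂ ha hb hab) hs hbar) hw.le
    _ ≤ (w₁ + w₂) * (w₁ / (w₁ + w₂) * h s₁ + w₂ / (w₁ + w₂) * h s₂) :=
        mul_le_mul_of_nonneg_left (hconv.2 hs₁ hs₂ ha hb hab) hw.le
    _ = w₁ * h s₁ + w₂ * h s₂ := by field_simp

theorem convexOn_inv_add {c : ℝ} (hc : 0 ≤ c) : ConvexOn ℝ (Ioi 0) fun s : ℝ => (s + c)⁻¹ := by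
  refine (((convexOn_zpow (-1)).translate_right c).subset (fun s (hs : 0 < s) => ?_)
    (convex_Ioi 0)).congr fun s _ => ?_
  · show 0 < c + s
    positivity
  · simp [add_comm]

theorem antitoneOn_inv_add {c : ℝ} (hc : 0 ≤ c) : AntitoneOn (fun s : ℝ => (s + c)⁻¹) (Ioi 0) :=
  fun _ hs _ _ hst => inv_anti₀ (add_pos_of_pos_of_nonneg hs hc) (by linarith)

theorem setIntegral_mul_le_add_mul {α : Type*} [MeasurableSpace α] {μ : Measure α} {s : Set α}
    (hs : MeasurableSet s) {F F₁ F₂ : α → ℝ} (hF : IntegrableOn F s μ)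
    (hF₁ : IntegrableOn F₁ s μ) (hF₂ : IntegrableOn F₂ s μ) {w w₁ w₂ : ℝ}
    (h : ∀ a ∈ s, w * F a ≤ w₁ * F₁ a + w₂ * F₂ a) :
    w * ∫ a in s, F a ∂μ ≤ w₁ * ∫ a in s, F₁ a ∂μ + w₂ * ∫ a in s, F₂ a ∂μ := by
  rw [← integral_const_mul, ← integral_const_mul, ← integral_const_mul,
    ← integral_add (hF₁.const_mul w₁) (hF₂.const_mul w₂)]
  exact setIntegral_mono_on (hF.const_mul w) ((hF₁.const_mul w₁).add (hF₂.const_mul w₂)) hs h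

theorem mul_div_add_eq_inv_inv_add {l t : ℝ} (hl : 0 < l) (ht : 0 < t) :
    l * t / (l + t) = (t⁻¹ + l⁻¹)⁻¹ := by
  field_simp

theorem IsOpMonotone.mul_le_add_mul {f : ℝ → ℝ} (hf : IsOpMonotone f) {w₁ w₂ x x₁ x₂ : ℝ}
    (hw₁ : 0 ≤ w₁) (hw₂ : 0 ≤ w₂) (hx : 0 < x) (hx₁ : 0 < x₁) (hx₂ : 0 < x₂)
    (hcrit : w₁ / x₁ + w₂ / x₂ ≤ (w₁ + w₂) / x) :
    (w₁ + w₂) * f x ≤ w₁ * f x₁ + w₂ * f x₂ := by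
  obtain ⟨c₀, c₁, μ, hc₁, hint, hf⟩ := hf
  have key (c : ℝ) (hc : 0 ≤ c) :
      (w₁ + w₂) * (x⁻¹ + c)⁻¹ ≤ w₁ * (x₁⁻¹ + c)⁻¹ + w₂ * (x₂⁻¹ + c)⁻¹ :=
    (convexOn_inv_add hc).mul_le_add_mul_of_antitoneOn (antitoneOn_inv_add hc) hw₁ hw₂
      (inv_pos.2 hx) (inv_pos.2 hx₁) (inv_pos.2 hx₂) (by simpa only [div_eq_mul_inv] using hcrit)
  have hlin : (w₁ + w₂) * x ≤ w₁ * x₁ + w₂ * x₂ := by simpa using key 0 le_rfl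
  have hint' := setIntegral_mul_le_add_mul measurableSet_Ioi (hint x hx.le) (hint x₁ hx₁.le)
    (hint x₂ hx₂.le) fun (l : ℝ) (hl : 0 < l) => by
      simpa only [mul_div_add_eq_inv_inv_add hl, hx, hx₁, hx₂] using key l⁻¹ (inv_nonneg.2 hl.le)
  rw [hf x hx.le, hf x₁ hx₁.le, hf x₂ hx₂.le]
  linear_combination hint' + mul_le_mul_of_nonneg_left hlin hc₁

theorem isOpMonotone_mul_div_add {l : ℝ} (hl : 0 < l) :
    IsOpMonotone fun t : ℝ => l * t / (l + t) := by
  refine ⟨0, 0, Measure.dirac l, le_rfl, fun t _ => ?_, fun t _ => ?_⟩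
  · exact ((integrable_const _).congr (ae_eq_dirac _).symm).integrableOn
  · classical
    rw [setIntegral_dirac (fun lam : ℝ => lam * t / (lam + t)) l (Ioi 0)]
    simp [hl]

theorem div_add_le_of_mul_div_add_le {w₁ w₂ x x₁ x₂ l : ℝ} (hl : 0 < l)
    (hx : 0 ≤ x) (hx₁ : 0 ≤ x₁) (hx₂ : 0 ≤ x₂)
    (h : (w₁ + w₂) * (l * x / (l + x)) ≤ w₁ * (l * x₁ / (l + x₁)) + w₂ * (l * x₂ / (l + x₂))) :
    w₁ / (l + x₁) + w₂ / (l + x₂) ≤ (w₁ + w₂) / (l + x) := by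
  have split {t : ℝ} (ht : 0 ≤ t) : l * t / (l + t) = l - l ^ 2 / (l + t) := by
    field_simp
    ring
  rw [split hx, split hx₁, split hx₂] at h
  refine le_of_mul_le_mul_left ?_ (pow_pos hl 2)
  linear_combination h

theorem div_add_le_of_forall_pos {w₁ w₂ x x₁ x₂ : ℝ} (hx : 0 < x) (hx₁ : 0 < x₁) (hx₂ : 0 < x₂)
    (h : ∀ l > 0, w₁ / (l + x₁) + w₂ / (l + x₂) ≤ (w₁ + w₂) / (l + x)) :
    w₁ / x₁ + w₂ / x₂ ≤ (w₁ + w₂) / x := by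
  have lim (a : ℝ) {t : ℝ} (ht : 0 < t) :
      Tendsto (fun l : ℝ => a / (l + t)) (𝓝[>] 0) (𝓝 (a / t)) := by
    refine tendsto_nhdsWithin_of_tendsto_nhds (tendsto_const_nhds.div ?_ ht.ne')
    simpa using (tendsto_id (x := 𝓝 (0 : ℝ))).add_const t
  exact le_of_tendsto_of_tendsto ((lim w₁ hx₁).add (lim w₂ hx₂)) (lim _ hx)
    (eventually_nhdsWithin_of_forall h)

/-- Point split validity criterion: for `w = w₁ + w₂` and positive `x, x₁, x₂`,
`w·f(x) ≤ w₁f(x₁) + w₂f(x₂)` holds for every operator monotone `f` if and only if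
`w/x ≥ w₁/x₁ + w₂/x₂`. -/
theorem point_split_valid_iff (w w₁ w₂ : ℝ) (hw₁ : 0 < w₁) (hw₂ : 0 < w₂)
    (hw : w = w₁ + w₂) (x x₁ x₂ : ℝ) (hx : 0 < x) (hx₁ : 0 < x₁) (hx₂ : 0 < x₂) :
    (∀ f : ℝ → ℝ, IsOpMonotone f → w * f x ≤ w₁ * f x₁ + w₂ * f x₂) ↔
      w₁ / x₁ + w₂ / x₂ ≤ w / x := by
  subst hw
  constructor
  · intro h
    refine div_add_le_of_forall_pos hx hx₁ hx₂ fun l hl => ?_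
    exact div_add_le_of_mul_div_add_le hl hx.le hx₁.le hx₂.le (h _ (isOpMonotone_mul_div_add hl))
  · intro hcrit f hf
    exact hf.mul_le_add_mul hw₁.le hw₂.le hx hx₁ hx₂ hcrit
end

section
/- Let h : [0,∞) → ℝ be finitely supported with ∑_x h(x) = 0, ∑_x x·h(x) > 0, and ∑_x h(x)/(λ+x) < 0 for all λ > 0. Then there exists Λ > 0 such that for all λ ≤ −Λ, ∑_x (λx/(λ+x))·h(x) ≥ 0. -/
/-! Since `λx/(λ+x) = x - x²/(λ+x) → x` as `λ → -∞`, the sum tends to `∑ x·h(x) > 0`, hence is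
positive for all sufficiently negative `λ`. -/

open Filter Topology

theorem tendsto_mul_div_add_atBot (x : ℝ) :
    Tendsto (fun lam : ℝ => lam * x / (lam + x)) atBot (𝓝 x) := by
  have hshift : Tendsto (fun lam : ℝ => lam + x) atBot atBot :=
    tendsto_atBot_add_const_right _ x tendsto_id
  have hcorr : Tendsto (fun lam : ℝ => x - x ^ 2 / (lam + x)) atBot (𝓝 x) := by
    simpa using tendsto_const_nhds.sub (tendsto_const_nhds.div_atBot hshift)
  refine hcorr.congr' ?_
  filter_upwards [hshift.eventually_lt_atBot 0] with lam hlam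
  field_simp [hlam.ne]
  ring

theorem tendsto_sum_mul_div_add_mul_atBot {ι : Type*} (s : Finset ι) (x w : ι → ℝ) :
    Tendsto (fun lam : ℝ => ∑ i ∈ s, (lam * x i / (lam + x i)) * w i) atBot
      (𝓝 (∑ i ∈ s, x i * w i)) :=
  tendsto_finsetSum s fun i _ => (tendsto_mul_div_add_atBot (x i)).mul_const (w i)

theorem strictly_valid_negative_lambda_general (h : ℝ →₀ ℝ)
    (hfirst : 0 < ∑ x ∈ h.support, x * h x) :
    ∃ Λ : ℝ, 0 < Λ ∧ ∀ lam : ℝ, lam ≤ -Λ →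
      0 ≤ ∑ x ∈ h.support, (lam * x / (lam + x)) * h x := by
  obtain ⟨a, ha⟩ := eventually_atBot.mp
    ((tendsto_sum_mul_div_add_mul_atBot h.support id h).eventually (lt_mem_nhds hfirst))
  refine ⟨max (-a) 1, by positivity, fun lam hlam => (ha lam ?_).le⟩
  linarith [le_max_left (-a) 1]

/-- Strictly valid functions are EBM on some `[0,Λ]`: if `h` is finitely supported on `[0,∞)`
with `∑ h = 0`, `∑ x·h(x) > 0` and `∑ h(x)/(λ+x) < 0` for all `λ > 0`, then there is `Λ > 0`
such that `∑ (λx/(λ+x))·h(x) ≥ 0` for all `λ ≤ -Λ`. -/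
theorem strictly_valid_negative_lambda (h : ℝ →₀ ℝ)
    (hsupp : ∀ x : ℝ, x < 0 → h x = 0)
    (hsum : ∑ x ∈ h.support, h x = 0)
    (hfirst : 0 < ∑ x ∈ h.support, x * h x)
    (hstrict : ∀ lam : ℝ, 0 < lam → ∑ x ∈ h.support, h x / (lam + x) < 0) :
    ∃ Λ : ℝ, 0 < Λ ∧ ∀ lam : ℝ, lam ≤ -Λ →
      0 ≤ ∑ x ∈ h.support, (lam * x / (lam + x)) * h x :=
  strictly_valid_negative_lambda_general h hfirst
end

section
/- Let Z be a PSD matrix on a finite-dimensional Hilbert space, ψ₀ a unit vector, and ε > 0. Set Λ ≥ max(‖Z‖, ‖Z‖²/ε) and Z' = (⟨ψ₀|Z|ψ₀⟩ + ε)|ψ₀⟩⟨ψ₀| + Λ(I − |ψ₀⟩⟨ψ₀|). Then Z' ⪰ Z, Z' is PSD, ψ₀ is an eigenvector of Z', and ⟨ψ₀|Z'|ψ₀⟩ = ⟨ψ₀|Z|ψ₀⟩ + ε. -/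
/-!
Write `x = ⟪ψ₀, x⟫ ψ₀ + v` with `v ⊥ ψ₀`. Then `Re ⟪x, (Z' - Z) x⟫ = ε |⟪ψ₀, x⟫|² + Λ ‖v‖² - 2r - q`
with `r = Re ⟪⟪ψ₀, x⟫ ψ₀, Z v⟫` and `q = Re ⟪v, Z v⟫`. Cauchy–Schwarz for the positive operator
`‖Z‖ - Z` (not for `Z` itself, which is too weak) gives `r² ≤ ‖Z‖ |⟪ψ₀, x⟫|² (‖Z‖ ‖v‖² - q)`, and
the two bounds `Λ ≥ ‖Z‖`, `εΛ ≥ ‖Z‖²` make this at most `ε |⟪ψ₀, x⟫|² (Λ ‖v‖² - q)`, so AM–GM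
absorbs the cross term `2r` into the diagonal terms.
-/

open ContinuousLinearMap RCLike InnerProductSpace
open scoped InnerProductSpace ComplexConjugate

theorem two_mul_add_le_of_sq_le {ε Λ M a q r t s : ℝ} (hε : 0 < ε) (hΛ : M ≤ Λ)
    (hΛε : M ^ 2 ≤ ε * Λ) (ha : 0 ≤ a) (hq : 0 ≤ q) (hqM : q ≤ M * s ^ 2)
    (hr : r ^ 2 ≤ (M * t ^ 2 - t ^ 2 * a) * (M * s ^ 2 - q)) :
    2 * r + q ≤ ε * t ^ 2 + Λ * s ^ 2 := by
  have hC : 0 ≤ Λ * s ^ 2 - q := by nlinarith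
  -- For `ε ≤ M` this uses `M ^ 2 ≤ ε * Λ`; for `M ≤ ε` it uses `M ≤ Λ`.
  have hkey : M * (M * s ^ 2 - q) ≤ ε * (Λ * s ^ 2 - q) := by
    rcases le_total ε M with h | h <;> nlinarith
  have hr' : (2 * r) ^ 2 ≤ (ε * t ^ 2 + (Λ * s ^ 2 - q)) ^ 2 := by
    nlinarith [mul_le_mul_of_nonneg_left hkey (sq_nonneg t),
      mul_nonneg (mul_nonneg ha (sq_nonneg t)) (sub_nonneg.2 hqM),
      sq_nonneg (ε * t ^ 2 - (Λ * s ^ 2 - q))]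
  linarith [le_abs_self (2 * r), abs_le_of_sq_le_sq hr' (by positivity)]

variable {𝕜 E : Type*} [RCLike 𝕜] [NormedAddCommGroup E] [InnerProductSpace 𝕜 E]

namespace ContinuousLinearMap

theorem IsPositive.re_inner_sq_le {T : E →L[𝕜] E} (hT : T.IsPositive) (x y : E) :
    re ⟪x, T y⟫_𝕜 ^ 2 ≤ re ⟪x, T x⟫_𝕜 * re ⟪y, T y⟫_𝕜 := by
  let _ := NormedSpace.restrictScalars ℝ 𝕜 E
  let B : LinearMap.BilinForm ℝ E := LinearMap.mk₂ ℝ (fun x y => re ⟪x, T y⟫_𝕜)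
    (fun _ _ _ => by simp [inner_add_left])
    (fun r x y => by
      change re ⟪(r : 𝕜) • x, T y⟫_𝕜 = r * _
      rw [inner_smul_left, conj_ofReal, re_ofReal_mul])
    (fun _ _ _ => by simp [inner_add_right])
    (fun r x y => by
      change re ⟪x, T ((r : 𝕜) • y)⟫_𝕜 = r * _
      rw [map_smul, inner_smul_right, re_ofReal_mul])
  refine B.apply_sq_le_of_symm (fun x => ?_) ⟨fun x y => ?_⟩ x y
  · simpa [B, hT.inner_left_eq_inner_right] using hT.re_inner_nonneg_left x
  · change re ⟪x, T y⟫_𝕜 = re ⟪y, T x⟫_𝕜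
    rw [← hT.inner_left_eq_inner_right, inner_re_symm]

theorem reApplyInnerSelf_le (Z : E →L[𝕜] E) (x : E) : Z.reApplyInnerSelf x ≤ ‖Z‖ * ‖x‖ ^ 2 :=
  calc re ⟪Z x, x⟫_𝕜 ≤ ‖Z x‖ * ‖x‖ := re_inner_le_norm _ _
    _ ≤ ‖Z‖ * ‖x‖ * ‖x‖ := by gcongr; exact Z.le_opNorm x
    _ = ‖Z‖ * ‖x‖ ^ 2 := by ring

theorem isPositive_norm_smul_one_sub {Z : E →L[𝕜] E} (hZ : (Z : E →ₗ[𝕜] E).IsSymmetric) :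
    ((‖Z‖ : 𝕜) • 1 - Z).IsPositive := by
  refine ⟨(LinearMap.IsSymmetric.one.smul (conj_ofReal _)).sub hZ, fun x => ?_⟩
  simpa [reApplyInnerSelf_apply, inner_sub_left, inner_smul_left, ← inner_self_eq_norm_sq]
    using Z.reApplyInnerSelf_le x

end ContinuousLinearMap

theorem re_inner_add_apply_add {Z : E →L[𝕜] E} (hZ : (Z : E →ₗ[𝕜] E).IsSymmetric) (u v : E) :
    re ⟪u + v, Z (u + v)⟫_𝕜 = re ⟪u, Z u⟫_𝕜 + 2 * re ⟪u, Z v⟫_𝕜 + re ⟪v, Z v⟫_𝕜 := by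
  have h : re ⟪v, Z u⟫_𝕜 = re ⟪u, Z v⟫_𝕜 := by rw [← hZ.apply_clm, inner_re_symm]
  simp only [map_add, inner_add_left, inner_add_right, h]
  ring

theorem re_inner_sq_le_of_inner_eq_zero {Z : E →L[𝕜] E} (hZ : (Z : E →ₗ[𝕜] E).IsSymmetric)
    {u v : E} (huv : ⟪u, v⟫_𝕜 = 0) :
    re ⟪u, Z v⟫_𝕜 ^ 2 ≤
      (‖Z‖ * ‖u‖ ^ 2 - re ⟪u, Z u⟫_𝕜) * (‖Z‖ * ‖v‖ ^ 2 - re ⟪v, Z v⟫_𝕜) := by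
  simpa [inner_sub_right, inner_smul_right, huv, ← inner_self_eq_norm_sq] using
    (isPositive_norm_smul_one_sub hZ).re_inner_sq_le u v

theorem re_inner_smul_apply_smul (Z : E →L[𝕜] E) (α : 𝕜) (ψ : E) :
    re ⟪α • ψ, Z (α • ψ)⟫_𝕜 = ‖α‖ ^ 2 * re ⟪ψ, Z ψ⟫_𝕜 := by
  rw [map_smul, inner_smul_left, inner_smul_right, ← mul_assoc, RCLike.conj_mul, ← ofReal_pow,
    re_ofReal_mul]

theorem inner_sub_inner_smul_self {ψ : E} (hψ : ‖ψ‖ = 1) (x : E) :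
    ⟪ψ, x - ⟪ψ, x⟫_𝕜 • ψ⟫_𝕜 = 0 := by
  rw [inner_sub_right, inner_smul_right, inner_self_eq_norm_sq_to_K, hψ]; simp

noncomputable def dualAdjustment (Z : E →L[𝕜] E) (ψ : E) (ε Λ : ℝ) : E →L[𝕜] E :=
  (⟪ψ, Z ψ⟫_𝕜 + ε) • rankOne 𝕜 ψ ψ + (Λ : 𝕜) • (1 - rankOne 𝕜 ψ ψ)

section

variable (Z : E →L[𝕜] E) {ψ : E} (ε Λ : ℝ)

theorem dualAdjustment_apply (x : E) :
    dualAdjustment Z ψ ε Λ x =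
      (⟪ψ, Z ψ⟫_𝕜 + ε) • ⟪ψ, x⟫_𝕜 • ψ + (Λ : 𝕜) • (x - ⟪ψ, x⟫_𝕜 • ψ) := rfl

theorem dualAdjustment_apply_self (hψ : ‖ψ‖ = 1) :
    dualAdjustment Z ψ ε Λ ψ = (⟪ψ, Z ψ⟫_𝕜 + ε) • ψ := by
  rw [dualAdjustment_apply, inner_self_eq_norm_sq_to_K, hψ]; simp

theorem inner_dualAdjustment_apply_self (hψ : ‖ψ‖ = 1) :
    ⟪ψ, dualAdjustment Z ψ ε Λ ψ⟫_𝕜 = ⟪ψ, Z ψ⟫_𝕜 + ε := by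
  rw [dualAdjustment_apply_self Z ε Λ hψ, inner_smul_right, inner_self_eq_norm_sq_to_K, hψ]; simp

theorem re_inner_dualAdjustment_apply (hψ : ‖ψ‖ = 1) (x : E) :
    re ⟪x, dualAdjustment Z ψ ε Λ x⟫_𝕜 =
      (re ⟪ψ, Z ψ⟫_𝕜 + ε) * ‖⟪ψ, x⟫_𝕜‖ ^ 2 + Λ * ‖x - ⟪ψ, x⟫_𝕜 • ψ‖ ^ 2 := by
  set v := x - ⟪ψ, x⟫_𝕜 • ψ
  have hxv : ⟪x, v⟫_𝕜 = (‖v‖ ^ 2 : ℝ) := by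
    conv_lhs => rw [show x = ⟪ψ, x⟫_𝕜 • ψ + v by simp [v]]
    rw [inner_add_left, inner_smul_left, inner_sub_inner_smul_self hψ, mul_zero, zero_add,
      inner_self_eq_norm_sq_to_K]
    push_cast; rfl
  rw [dualAdjustment_apply, inner_add_right, inner_smul_right, inner_smul_right, inner_smul_right,
    hxv, ← inner_conj_symm x ψ, RCLike.mul_conj]
  simp

theorem isSymmetric_dualAdjustment (hZ : (Z : E →ₗ[𝕜] E).IsSymmetric) :
    (dualAdjustment Z ψ ε Λ : E →ₗ[𝕜] E).IsSymmetric := by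
  have hreal : conj (⟪ψ, Z ψ⟫_𝕜 + ε) = ⟪ψ, Z ψ⟫_𝕜 + ε := by
    rw [map_add, conj_ofReal, inner_conj_symm, hZ.apply_clm]
  exact ((isSymmetric_rankOne_self ψ).smul hreal).add
    ((LinearMap.IsSymmetric.one.sub (isSymmetric_rankOne_self ψ)).smul (conj_ofReal _))

end

theorem isPositive_dualAdjustment_sub {Z : E →L[𝕜] E} (hZ : Z.IsPositive) {ψ : E}
    (hψ : ‖ψ‖ = 1) {ε Λ : ℝ} (hε : 0 < ε) (hΛ : ‖Z‖ ≤ Λ) (hΛε : ‖Z‖ ^ 2 ≤ ε * Λ) :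
    (dualAdjustment Z ψ ε Λ - Z).IsPositive := by
  refine ⟨(isSymmetric_dualAdjustment Z ε Λ hZ.isSymmetric).sub hZ.isSymmetric, fun x => ?_⟩
  set α := ⟪ψ, x⟫_𝕜
  set v := x - α • ψ
  have hZx : re ⟪x, Z x⟫_𝕜 =
      ‖α‖ ^ 2 * re ⟪ψ, Z ψ⟫_𝕜 + 2 * re ⟪α • ψ, Z v⟫_𝕜 + re ⟪v, Z v⟫_𝕜 := by
    rw [← re_inner_smul_apply_smul, ← re_inner_add_apply_add hZ.isSymmetric, add_sub_cancel]
  have hr := re_inner_sq_le_of_inner_eq_zero hZ.isSymmetric (u := α • ψ) (v := v)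
    (by rw [inner_smul_left, inner_sub_inner_smul_self hψ, mul_zero])
  rw [norm_smul, hψ, mul_one, re_inner_smul_apply_smul] at hr
  have hq : re ⟪v, Z v⟫_𝕜 ≤ ‖Z‖ * ‖v‖ ^ 2 := by
    rw [inner_re_symm]; exact Z.reApplyInnerSelf_le v
  have := two_mul_add_le_of_sq_le hε hΛ hΛε (hZ.re_inner_nonneg_right ψ)
    (hZ.re_inner_nonneg_right v) hq hr
  rw [reApplyInnerSelf_apply, inner_re_symm, sub_apply, inner_sub_right, map_sub,
    re_inner_dualAdjustment_apply Z ε Λ hψ, hZx]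
  linarith

/-- Adjusting a dual feasible point to have `ψ₀` as eigenvector: for a positive operator `Z`
on a finite-dimensional Hilbert space, a unit vector `ψ₀`, `ε > 0` and
`Λ ≥ max(‖Z‖, ‖Z‖²/ε)`, the operator
`Z' = (⟨ψ₀|Z|ψ₀⟩ + ε)|ψ₀⟩⟨ψ₀| + Λ(I - |ψ₀⟩⟨ψ₀|)` satisfies `Z' ⪰ Z`, `Z' ⪰ 0`,
`Z' ψ₀ = (⟨ψ₀|Z|ψ₀⟩ + ε) ψ₀` and `⟨ψ₀|Z'|ψ₀⟩ = ⟨ψ₀|Z|ψ₀⟩ + ε`. -/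
theorem eigenvector_dual_feasible_adjustment (n : ℕ)
    (Z : EuclideanSpace ℂ (Fin n) →L[ℂ] EuclideanSpace ℂ (Fin n))
    (hZ : Z.IsPositive) (ψ₀ : EuclideanSpace ℂ (Fin n)) (hψ₀ : ‖ψ₀‖ = 1)
    (ε : ℝ) (hε : 0 < ε) (Λ : ℝ) (hΛ : max ‖Z‖ (‖Z‖ ^ 2 / ε) ≤ Λ) :
    let P : EuclideanSpace ℂ (Fin n) →L[ℂ] EuclideanSpace ℂ (Fin n) :=
      (innerSL ℂ ψ₀).smulRight ψ₀
    let Z' : EuclideanSpace ℂ (Fin n) →L[ℂ] EuclideanSpace ℂ (Fin n) :=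
      ((inner ℂ ψ₀ (Z ψ₀) : ℂ) + (ε : ℂ)) • P + (Λ : ℂ) • (1 - P)
    (Z' - Z).IsPositive ∧ Z'.IsPositive ∧
      Z' ψ₀ = ((inner ℂ ψ₀ (Z ψ₀) : ℂ) + (ε : ℂ)) • ψ₀ ∧
      (inner ℂ ψ₀ (Z' ψ₀) : ℂ) = (inner ℂ ψ₀ (Z ψ₀) : ℂ) + (ε : ℂ) := by
  intro P Z'
  change (dualAdjustment Z ψ₀ ε Λ - Z).IsPositive ∧ (dualAdjustment Z ψ₀ ε Λ).IsPositive ∧ _ ∧ _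
  obtain ⟨hΛ₁, hΛ₂⟩ := max_le_iff.mp hΛ
  have hsub := isPositive_dualAdjustment_sub hZ hψ₀ hε hΛ₁ (by rwa [div_le_iff₀' hε] at hΛ₂)
  refine ⟨hsub, ?_, dualAdjustment_apply_self Z ε Λ hψ₀,
    inner_dualAdjustment_apply_self Z ε Λ hψ₀⟩
  simpa using hsub.add hZ
end

section
/- Let p, q, ξ : [0,∞)×[0,∞) → [0,∞) be finitely supported with ∑ p = ∑ q, and suppose the transition p + ξ → q + ξ is transitively valid (a composition of finitely many valid transitions). Then for every γ of the form 1/N with N a positive integer, the transition p + γξ → q + γξ is transitively valid, decomposable into N times as many valid transitions. -/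
/-- A difference function on a line is valid: finite support, total weight zero, and
`∑ d(x)/(λ+x) ≤ 0` for all `λ > 0`. -/
def ValidDiff (d : ℝ → ℝ) : Prop :=
  (Function.support d).Finite ∧ (∑ᶠ x, d x = 0) ∧
    ∀ lam : ℝ, 0 < lam → ∑ᶠ x, d x / (lam + x) ≤ 0

/-- A valid transition between functions on the plane: on every horizontal line (or on every
vertical line) the difference is a valid line difference. -/
def ValidTransition (p q : ℝ × ℝ → ℝ) : Prop :=
  (∀ y : ℝ, ValidDiff (fun x => q (x, y) - p (x, y))) ∨
  (∀ x : ℝ, ValidDiff (fun y => q (x, y) - p (x, y)))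

/-- `p → q` is transitively valid in `n` steps: there is a chain of `n` valid transitions
through finitely supported nonnegative functions from `p` to `q`. -/
def TransitivelyValidIn (n : ℕ) (p q : ℝ × ℝ → ℝ) : Prop :=
  ∃ c : ℕ → ℝ × ℝ → ℝ, c 0 = p ∧ c n = q ∧
    (∀ i ≤ n, (∀ z, 0 ≤ c i z) ∧ (Function.support (c i)).Finite) ∧
    ∀ i < n, ValidTransition (c i) (c (i + 1))

/-!
Write `γ = 1/N`. Since `p + γξ = (1 - γ)p + γ(p + ξ)`, scaling the given chain
`p + ξ → q + ξ` by `γ` and adding the catalyst `(1 - γ)p` to every state yields a chain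
`p + γξ → (1 - γ)p + γq + γξ`: validity only sees differences of consecutive states, and these
are merely scaled by `γ ≥ 0`. Repeating this, the `k`-th round moves one more `γ`-portion of `p`
to `q`, reaching `(1 - kγ)p + kγq + γξ`; after `N` rounds this is `q + γξ`.
-/

def IsFinNonneg {α : Type*} (f : α → ℝ) : Prop :=
  (∀ z, 0 ≤ f z) ∧ (Function.support f).Finite

namespace IsFinNonneg

variable {α : Type*} {f g : α → ℝ}

lemma add (hf : IsFinNonneg f) (hg : IsFinNonneg g) : IsFinNonneg fun z => f z + g z :=
  ⟨fun z => add_nonneg (hf.1 z) (hg.1 z), (hf.2.union hg.2).subset (Function.support_add f g)⟩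

lemma const_mul (hf : IsFinNonneg f) {a : ℝ} (ha : 0 ≤ a) : IsFinNonneg fun z => a * f z :=
  ⟨fun z => mul_nonneg ha (hf.1 z), hf.2.subset (Function.support_mul_subset_right _ f)⟩

end IsFinNonneg

lemma ValidDiff.const_mul {d : ℝ → ℝ} (h : ValidDiff d) {γ : ℝ} (hγ : 0 ≤ γ) :
    ValidDiff fun x => γ * d x := by
  obtain ⟨hfin, hsum, hneg⟩ := h
  refine ⟨hfin.subset (Function.support_mul_subset_right _ d), ?_, fun lam hlam => ?_⟩
  · rw [← mul_finsum, hsum, mul_zero]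
  · simp_rw [mul_div_assoc]
    rw [← mul_finsum]
    exact mul_nonpos_of_nonneg_of_nonpos hγ (hneg lam hlam)

lemma ValidTransition.of_sub_eq_const_mul {r s r' s' : ℝ × ℝ → ℝ} (h : ValidTransition r s)
    {γ : ℝ} (hγ : 0 ≤ γ) (hdiff : ∀ z, s' z - r' z = γ * (s z - r z)) :
    ValidTransition r' s' := by
  rcases h with h | h
  · exact Or.inl fun y => by simpa only [hdiff] using (h y).const_mul hγ
  · exact Or.inr fun x => by simpa only [hdiff] using (h x).const_mul hγ

namespace TransitivelyValidIn

lemma refl {f : ℝ × ℝ → ℝ} (hf : IsFinNonneg f) : TransitivelyValidIn 0 f f :=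
  ⟨fun _ => f, rfl, rfl, fun _ _ => hf, fun _ hi => absurd hi (Nat.not_lt_zero _)⟩

lemma trans {a b : ℕ} {p q r : ℝ × ℝ → ℝ} (h₁ : TransitivelyValidIn a p q)
    (h₂ : TransitivelyValidIn b q r) : TransitivelyValidIn (a + b) p r := by
  obtain ⟨c₁, hc₁0, hc₁a, hc₁s, hc₁t⟩ := h₁
  obtain ⟨c₂, hc₂0, hc₂b, hc₂s, hc₂t⟩ := h₂
  let c : ℕ → ℝ × ℝ → ℝ := fun i => if i < a then c₁ i else c₂ (i - a)
  have hlow : ∀ i ≤ a, c i = c₁ i := by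
    intro i hi
    rcases hi.lt_or_eq with hi | rfl
    · exact if_pos hi
    · simp only [c, lt_irrefl, if_false, Nat.sub_self, hc₂0, hc₁a]
  have hhigh : ∀ i, a ≤ i → c i = c₂ (i - a) := fun i hi => if_neg hi.not_gt
  refine ⟨c, hlow 0 (Nat.zero_le a) ▸ hc₁0, ?_, fun i hi => ?_, fun i hi => ?_⟩
  · rw [hhigh _ (Nat.le_add_right a b), Nat.add_sub_cancel_left, hc₂b]
  · rcases le_total i a with hia | hai
    · exact hlow i hia ▸ hc₁s i hia
    · exact hhigh i hai ▸ hc₂s (i - a) (by omega)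
  · rcases lt_or_ge i a with hia | hai
    · rw [hlow i hia.le, hlow (i + 1) hia]
      exact hc₁t i hia
    · rw [hhigh i hai, hhigh (i + 1) (by omega), Nat.sub_add_comm hai]
      exact hc₂t (i - a) (by omega)

lemma const_mul_add {n : ℕ} {r s η : ℝ × ℝ → ℝ} (h : TransitivelyValidIn n r s) {γ : ℝ}
    (hγ : 0 ≤ γ) (hη : IsFinNonneg η) :
    TransitivelyValidIn n (fun z => γ * r z + η z) (fun z => γ * s z + η z) := by
  obtain ⟨c, rfl, rfl, hcs, hct⟩ := h
  refine ⟨fun i z => γ * c i z + η z, rfl, rfl, fun i hi => ?_, fun i hi => ?_⟩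
  · exact ((show IsFinNonneg (c i) from hcs i hi).const_mul hγ).add hη
  · exact (hct i hi).of_sub_eq_const_mul hγ fun z => by ring

end TransitivelyValidIn

lemma transitivelyValidIn_catalyst_rounds {p q ξ : ℝ × ℝ → ℝ} (hp : IsFinNonneg p)
    (hq : IsFinNonneg q) (hξ : IsFinNonneg ξ) {m : ℕ}
    (hm : TransitivelyValidIn m (fun z => p z + ξ z) (fun z => q z + ξ z))
    {γ : ℝ} (hγ : 0 ≤ γ) (k : ℕ) (hk : (k : ℝ) * γ ≤ 1) :
    TransitivelyValidIn (k * m) (fun z => p z + γ * ξ z)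
      (fun z => (1 - k * γ) * p z + k * γ * q z + γ * ξ z) := by
  induction k with
  | zero =>
    simpa only [Nat.cast_zero, zero_mul, sub_zero, one_mul, add_zero, Nat.zero_mul]
      using TransitivelyValidIn.refl (hp.add (hξ.const_mul hγ))
  | succ k ih =>
    push_cast at hk
    have hη : IsFinNonneg fun z => (1 - (k + 1) * γ) * p z + k * γ * q z :=
      (hp.const_mul (by linarith)).add (hq.const_mul (by positivity))
    rw [Nat.succ_mul]
    refine (ih (by linarith)).trans ?_
    convert hm.const_mul_add hγ hη using 1 <;> funext z <;> push_cast <;> ring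

theorem catalyst_reduction_general (p q ξ : ℝ × ℝ → ℝ)
    (hp : ∀ z, 0 ≤ p z) (hq : ∀ z, 0 ≤ q z) (hξ : ∀ z, 0 ≤ ξ z)
    (hpfin : (Function.support p).Finite) (hqfin : (Function.support q).Finite)
    (hξfin : (Function.support ξ).Finite)
    (m : ℕ) (hm : TransitivelyValidIn m (fun z => p z + ξ z) (fun z => q z + ξ z)) :
    ∀ N : ℕ, 0 < N →
      TransitivelyValidIn (N * m) (fun z => p z + (N : ℝ)⁻¹ * ξ z)
        (fun z => q z + (N : ℝ)⁻¹ * ξ z) := by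
  intro N hN
  have hNγ : (N : ℝ) * (N : ℝ)⁻¹ = 1 := mul_inv_cancel₀ (Nat.cast_ne_zero.mpr hN.ne')
  have := transitivelyValidIn_catalyst_rounds ⟨hp, hpfin⟩ ⟨hq, hqfin⟩ ⟨hξ, hξfin⟩ hm
    (by positivity) N hNγ.le
  simpa only [hNγ, sub_self, zero_mul, zero_add, one_mul] using this

/-- Catalyst reduction: if `p + ξ → q + ξ` is transitively valid in `m` steps then for every
`γ = 1/N` the transition `p + γξ → q + γξ` is transitively valid in `N·m` steps. -/
theorem catalyst_reduction (p q ξ : ℝ × ℝ → ℝ)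
    (hp : ∀ z, 0 ≤ p z) (hq : ∀ z, 0 ≤ q z) (hξ : ∀ z, 0 ≤ ξ z)
    (hpfin : (Function.support p).Finite) (hqfin : (Function.support q).Finite)
    (hξfin : (Function.support ξ).Finite)
    (hsum : ∑ᶠ z, p z = ∑ᶠ z, q z)
    (m : ℕ) (hm : TransitivelyValidIn m (fun z => p z + ξ z) (fun z => q z + ξ z)) :
    ∀ N : ℕ, 0 < N →
      TransitivelyValidIn (N * m) (fun z => p z + (N : ℝ)⁻¹ * ξ z)
        (fun z => q z + (N : ℝ)⁻¹ * ξ z) :=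
  catalyst_reduction_general p q ξ hp hq hξ hpfin hqfin hξfin m hm
end
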